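/- Let μ, R, L, h be positive reals and for α > 0 define the Womersley flow rate q(α) = (−ĵ π h R⁴/(L μ α²)) · [1 + 2 exp(πĵ/4) J₁(exp(3πĵ/4) α) / (α J₀(exp(3πĵ/4) α))]. Then q(α) converges to the steady Poiseuille flow rate in the quasi-steady limit: q(α) → π h R⁴/(8 μ L) as α → 0⁺. -/

import Mathlib

open Complex Real Filter

/-- Bessel function of the first kind of order zero, defined by its power series. -/
noncomputable def J0 (z : ℂ) : ℂ :=
  ∑' k : ℕ, (-1 : ℂ) ^ k * (z / 2) ^ (2 * k) / ((k.factorial : ℂ)) ^ 2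

/-- Bessel function of the first kind of order one, defined by its power series. -/
noncomputable def J1 (z : ℂ) : ℂ :=
  ∑' k : ℕ, (-1 : ℂ) ^ k * (z / 2) ^ (2 * k + 1) / ((k.factorial : ℂ) * ((k + 1).factorial : ℂ))

/-!
With `β = exp (3πi/4)` we have `β² = -i` and `exp (πi/4) β = -1`, so writing
`J₀ z = A (z²)` and `J₁ z = (z/2) B (z²)` with power series `A, B`, at `w = (βα)² = -iα²`
the bracket of the flow rate is `1 - B(w)/A(w) = (A(w) - B(w))/A(w)`. Since `A` and `B` both
start with `1 + w·(…)`, this is `w·D(w)/A(w)` with `D(0) = -1/4 + 1/8 = -1/8`. Hence the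
bracket behaves like `-iα² · (-1/8) = iα²/8`, which cancels the prefactor `-i/α²`.
-/

open Nat Topology

lemma summable_norm_pow_div_natCast {𝕜 : Type*} [RCLike 𝕜] {x : 𝕜} (hx : ‖x‖ < 1)
    {n : ℕ → ℕ} (hn : ∀ k, n k ≠ 0) : Summable fun k => ‖x ^ k / (n k : 𝕜)‖ := by
  refine .of_nonneg_of_le (fun _ => norm_nonneg _) (fun k => ?_)
    (summable_geometric_of_lt_one (norm_nonneg x) hx)
  rw [norm_div, norm_pow, RCLike.norm_natCast]
  exact div_le_self (by positivity) (mod_cast Nat.one_le_iff_ne_zero.2 (hn k))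

section PowerSeries

variable {𝕜 : Type*} [NormedField 𝕜]

lemma norm_mul_pow_le (a : 𝕜) {w : 𝕜} (hw : ‖w‖ ≤ 1) (k : ℕ) : ‖a * w ^ k‖ ≤ ‖a‖ := by
  rw [norm_mul, norm_pow]
  exact mul_le_of_le_one_right (norm_nonneg _) (pow_le_one₀ (norm_nonneg _) hw)

variable [CompleteSpace 𝕜] {a : ℕ → 𝕜}

lemma summable_mul_pow (ha : Summable (‖a ·‖)) {w : 𝕜} (hw : ‖w‖ ≤ 1) :
    Summable fun k => a k * w ^ k :=
  .of_norm_bounded ha fun k => norm_mul_pow_le (a k) hw k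

lemma tsum_mul_pow_eq_add_mul_tsum_succ (ha : Summable (‖a ·‖)) {w : 𝕜} (hw : ‖w‖ ≤ 1) :
    ∑' k, a k * w ^ k = a 0 + w * ∑' k, a (k + 1) * w ^ k := by
  rw [(summable_mul_pow ha hw).tsum_eq_zero_add, ← tsum_mul_left]
  simp only [pow_zero, mul_one, pow_succ, mul_left_comm w, mul_comm _ w]

lemma continuousOn_tsum_mul_pow (ha : Summable (‖a ·‖)) :
    ContinuousOn (fun w => ∑' k, a k * w ^ k) (Metric.closedBall 0 1) :=
  continuousOn_tsum (fun k => (continuous_const.mul (continuous_pow k)).continuousOn) ha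
    fun k w hw => norm_mul_pow_le (a k) (by simpa using hw) k

lemma tendsto_tsum_mul_pow_nhds_zero (ha : Summable (‖a ·‖)) :
    Tendsto (fun w => ∑' k, a k * w ^ k) (𝓝 0) (𝓝 (a 0)) := by
  have h := ((continuousOn_tsum_mul_pow ha).continuousAt
    (Metric.closedBall_mem_nhds 0 one_pos)).tendsto
  rwa [tsum_mul_pow_eq_add_mul_tsum_succ ha (by simp), zero_mul, add_zero] at h

end PowerSeries

noncomputable def besselJ0Coeff (k : ℕ) : ℂ := (-1 / 4) ^ k / ((k ! ^ 2 : ℕ) : ℂ)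

noncomputable def besselJ1Coeff (k : ℕ) : ℂ := (-1 / 4) ^ k / ((k ! * (k + 1)! : ℕ) : ℂ)

@[simp] lemma besselJ0Coeff_zero : besselJ0Coeff 0 = 1 := by simp [besselJ0Coeff]

@[simp] lemma besselJ1Coeff_zero : besselJ1Coeff 0 = 1 := by simp [besselJ1Coeff]

lemma summable_norm_besselJ0Coeff : Summable (‖besselJ0Coeff ·‖) :=
  summable_norm_pow_div_natCast (by norm_num) fun k => by positivity

lemma summable_norm_besselJ1Coeff : Summable (‖besselJ1Coeff ·‖) :=
  summable_norm_pow_div_natCast (by norm_num) fun k => by positivity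

lemma J0_eq_tsum (z : ℂ) : J0 z = ∑' k, besselJ0Coeff k * (z ^ 2) ^ k := by
  refine tsum_congr fun k => ?_
  rw [besselJ0Coeff, pow_mul, ← mul_pow]
  push_cast
  ring

lemma J1_eq_mul_tsum (z : ℂ) : J1 z = z / 2 * ∑' k, besselJ1Coeff k * (z ^ 2) ^ k := by
  rw [← tsum_mul_left]
  refine tsum_congr fun k => ?_
  rw [besselJ1Coeff, pow_succ, pow_mul, ← mul_assoc, ← mul_pow]
  push_cast
  ring

lemma exp_three_pi_mul_I_div_four_sq : exp (3 * π * I / 4) ^ 2 = -I := by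
  rw [← Complex.exp_nat_mul,
    show ((2 : ℕ) : ℂ) * (3 * π * I / 4) = π / 2 * I + π * I by push_cast; ring,
    Complex.exp_add, exp_pi_mul_I, exp_mul_I, Complex.cos_pi_div_two, Complex.sin_pi_div_two]
  ring

lemma exp_pi_mul_I_div_four_mul_exp_three_pi_mul_I_div_four :
    exp (π * I / 4) * exp (3 * π * I / 4) = -1 := by
  rw [← Complex.exp_add, show (π : ℂ) * I / 4 + 3 * π * I / 4 = π * I by ring, exp_pi_mul_I]

noncomputable def besselJ0Series (w : ℂ) : ℂ := ∑' k, besselJ0Coeff k * w ^ k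

noncomputable def besselJ1Series (w : ℂ) : ℂ := ∑' k, besselJ1Coeff k * w ^ k

noncomputable def besselSeriesDiffQuot (w : ℂ) : ℂ :=
  ∑' k, besselJ0Coeff (k + 1) * w ^ k - ∑' k, besselJ1Coeff (k + 1) * w ^ k

lemma besselJ0Series_sub_besselJ1Series {w : ℂ} (hw : ‖w‖ ≤ 1) :
    besselJ0Series w - besselJ1Series w = w * besselSeriesDiffQuot w := by
  rw [besselJ0Series, besselJ1Series, besselSeriesDiffQuot,
    tsum_mul_pow_eq_add_mul_tsum_succ summable_norm_besselJ0Coeff hw,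
    tsum_mul_pow_eq_add_mul_tsum_succ summable_norm_besselJ1Coeff hw, besselJ0Coeff_zero,
    besselJ1Coeff_zero]
  ring

lemma tendsto_besselJ0Series : Tendsto besselJ0Series (𝓝 0) (𝓝 1) := by
  have h := tendsto_tsum_mul_pow_nhds_zero summable_norm_besselJ0Coeff
  rwa [besselJ0Coeff_zero] at h

lemma tendsto_besselSeriesDiffQuot : Tendsto besselSeriesDiffQuot (𝓝 0) (𝓝 (-1 / 8)) := by
  have h0 := tendsto_tsum_mul_pow_nhds_zero
    ((summable_nat_add_iff (f := (‖besselJ0Coeff ·‖)) 1).2 summable_norm_besselJ0Coeff)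
  have h1 := tendsto_tsum_mul_pow_nhds_zero
    ((summable_nat_add_iff (f := (‖besselJ1Coeff ·‖)) 1).2 summable_norm_besselJ1Coeff)
  have h := h0.sub h1
  rwa [show besselJ0Coeff 1 - besselJ1Coeff 1 = -1 / 8 by
    norm_num [besselJ0Coeff, besselJ1Coeff]] at h

lemma womersley_bracket_eq {α : ℂ} (hα : α ≠ 0) :
    1 + 2 * exp (π * I / 4) * J1 (exp (3 * π * I / 4) * α) / (α * J0 (exp (3 * π * I / 4) * α)) =
      1 - besselJ1Series (-I * α ^ 2) / besselJ0Series (-I * α ^ 2) := by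
  have hJ1 : 2 * exp (π * I / 4) * J1 (exp (3 * π * I / 4) * α) =
      α * -besselJ1Series (-I * α ^ 2) := by
    rw [J1_eq_mul_tsum, mul_pow, exp_three_pi_mul_I_div_four_sq, ← besselJ1Series]
    linear_combination (α * besselJ1Series (-I * α ^ 2)) *
      exp_pi_mul_I_div_four_mul_exp_three_pi_mul_I_div_four
  rw [hJ1, J0_eq_tsum, mul_pow, exp_three_pi_mul_I_div_four_sq, ← besselJ0Series,
    mul_div_mul_left _ _ hα, neg_div, ← sub_eq_add_neg]

lemma tendsto_womersley_bracket_div_sq :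
    Tendsto (fun α : ℂ => (1 + 2 * exp (π * I / 4) * J1 (exp (3 * π * I / 4) * α)
      / (α * J0 (exp (3 * π * I / 4) * α))) / α ^ 2) (𝓝[≠] 0) (𝓝 (I / 8)) := by
  have hw : Tendsto (fun α : ℂ => -I * α ^ 2) (𝓝[≠] 0) (𝓝 0) :=
    (Continuous.tendsto' (by fun_prop) 0 0 (by simp)).mono_left nhdsWithin_le_nhds
  have hA : Tendsto (fun α => besselJ0Series (-I * α ^ 2)) (𝓝[≠] 0) (𝓝 1) :=
    tendsto_besselJ0Series.comp hw
  have hD : Tendsto (fun α => besselSeriesDiffQuot (-I * α ^ 2)) (𝓝[≠] 0) (𝓝 (-1 / 8)) :=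
    tendsto_besselSeriesDiffQuot.comp hw
  have hlim := (hD.div hA one_ne_zero).const_mul (-I)
  rw [show -I * (-1 / 8 / 1) = I / 8 by ring] at hlim
  refine hlim.congr' ?_
  filter_upwards [self_mem_nhdsWithin, nhdsWithin_le_nhds (Metric.closedBall_mem_nhds 0 one_pos),
    hA.eventually_ne one_ne_zero] with α (hα : α ≠ 0) hα1 hAα
  have hwα : ‖-I * α ^ 2‖ ≤ 1 := by
    simpa using pow_le_one₀ (n := 2) (norm_nonneg α) (mem_closedBall_zero_iff.1 hα1)
  rw [Pi.div_apply, womersley_bracket_eq hα, one_sub_div hAα,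
    besselJ0Series_sub_besselJ1Series hwα]
  field_simp

theorem womersley_flow_rate_tendsto_poiseuille_general
    (μ R L h : ℝ) :
    Tendsto
      (fun α : ℝ =>
        (-I * (π : ℂ) * (h : ℂ) * (R : ℂ) ^ 4 / ((L : ℂ) * (μ : ℂ) * (α : ℂ) ^ 2)) *
          (1 + 2 * Complex.exp ((π : ℂ) * I / 4) * J1 (Complex.exp (3 * (π : ℂ) * I / 4) * (α : ℂ))
            / ((α : ℂ) * J0 (Complex.exp (3 * (π : ℂ) * I / 4) * (α : ℂ)))))
      (nhdsWithin 0 (Set.Ioi 0))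
      (nhds ((π * h * R ^ 4 / (8 * μ * L) : ℝ) : ℂ)) := by
  have hα : Tendsto (fun α : ℝ => (α : ℂ)) (𝓝[>] 0) (𝓝[≠] 0) :=
    tendsto_nhdsWithin_iff.2 ⟨(continuous_ofReal.tendsto' 0 0 ofReal_zero).mono_left
      nhdsWithin_le_nhds, eventually_mem_nhdsWithin.mono fun α hα => ofReal_ne_zero.2 hα.ne'⟩
  have hlim := (tendsto_womersley_bracket_div_sq.comp hα).const_mul
    (-I * π * h * R ^ 4 / (L * μ))
  convert hlim using 2 with α
  · simp only [Function.comp_apply]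
    ring
  · push_cast
    linear_combination (π * h * R ^ 4 / (8 * L * μ) : ℂ) * I_sq

theorem womersley_flow_rate_tendsto_poiseuille
    (μ R L h : ℝ) (hμ : 0 < μ) (hR : 0 < R) (hL : 0 < L) (hh : 0 < h) :
    Tendsto
      (fun α : ℝ =>
        (-I * (π : ℂ) * (h : ℂ) * (R : ℂ) ^ 4 / ((L : ℂ) * (μ : ℂ) * (α : ℂ) ^ 2)) *
          (1 + 2 * Complex.exp ((π : ℂ) * I / 4) * J1 (Complex.exp (3 * (π : ℂ) * I / 4) * (α : ℂ))
            / ((α : ℂ) * J0 (Complex.exp (3 * (π : ℂ) * I / 4) * (α : ℂ)))))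
      (nhdsWithin 0 (Set.Ioi 0))
      (nhds ((π * h * R ^ 4 / (8 * μ * L) : ℝ) : ℂ)) :=
  womersley_flow_rate_tendsto_poiseuille_general μ R L h
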